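/- Let β ∈ [0,1] be such that G_k(β) < 0, i.e., the supremum of g_k(β,δ) over δ ∈ [0,β/2] is negative. Then α_k ≥ β. Consequently α_k ≥ sup { β ∈ [0,1] : G_k(β) < 0 }. -/

import Mathlib

open Filter

/-- Costs for the Levenshtein distance (as in the former Mathlib
`Mathlib/Data/List/EditDistance/Defs.lean`, removed since). -/
structure Levenshtein.Cost (α β δ : Type*) where
  /-- Cost to delete an element from a list. -/
  delete : α → δ
  /-- Cost to insert an element into a list. -/
  insert : β → δ
  /-- Cost to substitute one element for another in a list. -/
  substitute : α → β → δ

/-- The default cost structure, for which all operations cost `1` (and a match costs `0`). -/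
def Levenshtein.defaultCost {α : Type*} [DecidableEq α] : Levenshtein.Cost α α ℕ where
  delete _ := 1
  insert _ := 1
  substitute a b := if a = b then 0 else 1

/-- (Internal) dynamic programming step, as in the former Mathlib. -/
def Levenshtein.impl {α β δ : Type*} [AddZeroClass δ] [Min δ]
    (C : Levenshtein.Cost α β δ) (xs : List α) (y : β) (d : {r : List δ // 0 < r.length}) :
    {r : List δ // 0 < r.length} :=
  let ⟨ds, w⟩ := d
  xs.zip (ds.zip ds.tail) |>.foldr
    (init := ⟨[ds.getLast (List.length_pos_iff.mp w) + C.insert y], by simp⟩)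
    (fun ⟨x, d₀, d₁⟩ ⟨r, w⟩ =>
      ⟨min (C.delete x + r[0]) (min (C.insert y + d₀) (C.substitute x y + d₁)) :: r, by simp⟩)

/-- The Levenshtein distances from all suffixes of `xs` to `ys`, as in the former Mathlib. -/
def suffixLevenshtein {α β δ : Type*} [AddZeroClass δ] [Min δ]
    (C : Levenshtein.Cost α β δ) (xs : List α) (ys : List β) : {r : List δ // 0 < r.length} :=
  ys.foldr
    (Levenshtein.impl C xs)
    (xs.foldr (init := ⟨[0], by simp⟩) (fun a ⟨ds, w⟩ => ⟨(C.delete a + ds[0]) :: ds, by simp⟩))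

/-- The Levenshtein distance between two lists, as in the former Mathlib. -/
def levenshtein {α β δ : Type*} [AddZeroClass δ] [Min δ]
    (C : Levenshtein.Cost α β δ) (xs : List α) (ys : List β) : δ :=
  let ⟨r, w⟩ := suffixLevenshtein C xs ys
  r[0]

/-- Edit distance between two strings over `Fin k`, with unit costs for
substitution, deletion and insertion, and cost `0` for a match. -/
def editDist {k : ℕ} (x y : List (Fin k)) : ℕ :=
  levenshtein Levenshtein.defaultCost x y

/-- `e_k(n)`: the average edit distance between two independent uniformly
random strings of length `n` over an alphabet of size `k`. -/
noncomputable def avgEditDist (k n : ℕ) : ℝ :=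
  ((k : ℝ) ^ (2 * n))⁻¹ *
    ∑ x : Fin n → Fin k, ∑ y : Fin n → Fin k,
      (editDist (List.ofFn x) (List.ofFn y) : ℝ)

/-- `α_k(n) = e_k(n)/n`. -/
noncomputable def alphaN (k n : ℕ) : ℝ := avgEditDist k n / n

/-- The binary entropy function `H(t) = -t·log₂ t - (1-t)·log₂(1-t)`. -/
noncomputable def binEntropy (t : ℝ) : ℝ :=
  -(t * Real.logb 2 t) - (1 - t) * Real.logb 2 (1 - t)

/-- The exponent function `g_k(β,δ)`. -/
noncomputable def gExp (k : ℕ) (β δ : ℝ) : ℝ :=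
  (β - 2 * δ) * Real.logb 2 ((k : ℝ) - 1) - (1 - δ) * Real.logb 2 (k : ℝ) +
    2 * binEntropy δ + (1 - δ) * binEntropy ((β - 2 * δ) / (1 - δ))

/-- `G_k(β) = sup { g_k(β,δ) : 0 ≤ δ ≤ β/2 }`. -/
noncomputable def GExp (k : ℕ) (β : ℝ) : ℝ :=
  sSup (gExp k β '' Set.Icc 0 (β / 2))

/-!
Two strings at edit distance at most `m` are related by an edit script with `D` deletions, `D`
insertions and `S` substitutions, `2D + S ≤ m`, which may be taken in a normal form where no
insertion directly follows a deletion. Counting normal-form scripts, a fixed string of length `n`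
has at most `k^D (k-1)^S C(n,D)^2 C(n-D,S) ≤ k^n 2^{n g_k((2D+S)/n, D/n)}` such neighbours.
Since `G_k(β) < 0` forces `β ≤ 1 - 1/k`, where `g_k(·, δ)` is increasing, every exponent is at
most `n G_k(β)`: only a fraction `(m+1)^2 2^{n G_k(β)} → 0` of all pairs lies within distance
`m = ⌊βn⌋`, hence `e_k(n) ≥ βn - o(n)`.
-/

namespace Levenshtein

variable {α : Type*} [DecidableEq α]

@[simp]
theorem defaultCost_delete (a : α) : (defaultCost : Cost α α ℕ).delete a = 1 := rfl

@[simp]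
theorem defaultCost_insert (a : α) : (defaultCost : Cost α α ℕ).insert a = 1 := rfl

@[simp]
theorem defaultCost_substitute (a b : α) :
    (defaultCost : Cost α α ℕ).substitute a b = if a = b then 0 else 1 := rfl

end Levenshtein

section

variable {α β δ : Type*} [AddZeroClass δ] [Min δ] (C : Levenshtein.Cost α β δ)

theorem suffixLevenshtein_cons₂ (xs : List α) (y : β) (ys : List β) :
    suffixLevenshtein C xs (y :: ys) = Levenshtein.impl C xs y (suffixLevenshtein C xs ys) :=
  rfl

theorem Levenshtein.impl_cons_fst (x : α) (xs : List α) (y : β)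
    (d s : {r : List δ // 0 < r.length}) (h : d.1.tail = s.1) :
    (impl C (x :: xs) y d).1 =
      min (C.delete x + (impl C xs y s).1[0]'(impl C xs y s).2)
        (min (C.insert y + d.1[0]'d.2) (C.substitute x y + s.1[0]'s.2)) :: (impl C xs y s).1 := by
  obtain ⟨_ | ⟨d₀, _ | ⟨d₁, ds⟩⟩, hd⟩ := d
  · simp at hd
  · obtain ⟨s, hs⟩ := s
    subst h
    simp at hs
  · obtain ⟨s, hs⟩ := s
    subst h
    rfl

theorem suffixLevenshtein_cons₁_tail (x : α) (xs : List α) (ys : List β) :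
    (suffixLevenshtein C (x :: xs) ys).1.tail = (suffixLevenshtein C xs ys).1 := by
  induction ys with
  | nil => rfl
  | cons y ys ih =>
    rw [suffixLevenshtein_cons₂, suffixLevenshtein_cons₂,
      Levenshtein.impl_cons_fst C x xs y _ _ ih, List.tail_cons]

theorem suffixLevenshtein_nil₁ (ys : List β) :
    (suffixLevenshtein C [] ys).1 = [levenshtein C [] ys] := by
  induction ys with
  | nil => rfl
  | cons y ys ih =>
    unfold levenshtein
    rw [suffixLevenshtein_cons₂]
    generalize suffixLevenshtein C [] ys = s at ih ⊢
    obtain ⟨s, hs⟩ := s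
    subst ih
    rfl

@[simp]
theorem levenshtein_cons_nil (x : α) (xs : List α) :
    levenshtein C (x :: xs) ([] : List β) = C.delete x + levenshtein C xs [] := rfl

@[simp]
theorem levenshtein_nil_cons (y : β) (ys : List β) :
    levenshtein C ([] : List α) (y :: ys) = levenshtein C [] ys + C.insert y := by
  have h := suffixLevenshtein_nil₁ C ys
  unfold levenshtein
  rw [suffixLevenshtein_cons₂]
  generalize suffixLevenshtein C [] ys = s at h ⊢
  obtain ⟨s, hs⟩ := s
  subst h
  rfl

theorem levenshtein_cons_cons (x : α) (xs : List α) (y : β) (ys : List β) :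
    levenshtein C (x :: xs) (y :: ys) =
      min (C.delete x + levenshtein C xs (y :: ys))
        (min (C.insert y + levenshtein C (x :: xs) ys)
          (C.substitute x y + levenshtein C xs ys)) := by
  unfold levenshtein
  simp only [suffixLevenshtein_cons₂,
    Levenshtein.impl_cons_fst C x xs y _ _ (suffixLevenshtein_cons₁_tail C x xs ys),
    List.getElem_cons_zero]

end

/-- Normal-form edit scripts: no insertion directly follows a deletion, nor comes first when
`q = false`. Fixing the order of adjacent deletions and insertions is what makes `normalEditBound`
an upper bound for their number. -/
inductive NormalEdit {α : Type*} : Bool → ℕ → ℕ → ℕ → List α → List α → Prop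
  | nil {q} : NormalEdit q 0 0 0 [] []
  | keep {q D I S x y} (a : α) : NormalEdit true D I S x y → NormalEdit q D I S (a :: x) (a :: y)
  | sub {q D I S x y} {a b : α} :
      a ≠ b → NormalEdit true D I S x y → NormalEdit q D I (S + 1) (a :: x) (b :: y)
  | del {q D I S x y} (a : α) : NormalEdit false D I S x y → NormalEdit q (D + 1) I S (a :: x) y
  | ins {D I S x y} (b : α) : NormalEdit true D I S x y → NormalEdit true D (I + 1) S x (b :: y)

namespace NormalEdit

open Levenshtein

variable {α : Type*} {q : Bool} {D I S : ℕ} {x y : List α}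

theorem length_add (h : NormalEdit q D I S x y) : x.length + I = y.length + D := by
  induction h <;> simp only [List.length_cons] <;> omega

theorem add_le_length (h : NormalEdit q D I S x y) : D + S ≤ x.length := by
  induction h <;> grind

-- A new deletion is pushed past the insertions at the front of the script.
theorem cons_del (a : α) (h : NormalEdit q D I S x y) : NormalEdit true (D + 1) I S (a :: x) y := by
  induction h with
  | nil => exact del a nil
  | keep c h => exact del a (keep c h)
  | sub hne h => exact del a (sub hne h)
  | del c h => exact del a (del c h)
  | ins b _ ih => exact ins b ih

theorem exists_le_levenshtein [DecidableEq α] (x y : List α) :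
    ∃ D I S, NormalEdit true D I S x y ∧ D + I + S ≤ levenshtein defaultCost x y := by
  induction x generalizing y with
  | nil =>
    induction y with
    | nil => exact ⟨0, 0, 0, nil, le_rfl⟩
    | cons b y ih =>
      obtain ⟨D, I, S, h, hc⟩ := ih
      exact ⟨D, I + 1, S, ins b h, by rw [levenshtein_nil_cons, defaultCost_insert]; omega⟩
  | cons a x ihx =>
    induction y with
    | nil =>
      obtain ⟨D, I, S, h, hc⟩ := ihx []
      exact ⟨D + 1, I, S, h.cons_del a, by rw [levenshtein_cons_nil, defaultCost_delete]; omega⟩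
    | cons b y ihy =>
      rw [levenshtein_cons_cons, defaultCost_delete, defaultCost_insert, defaultCost_substitute]
      obtain ⟨D₁, I₁, S₁, h₁, hc₁⟩ := ihx (b :: y)
      obtain ⟨D₂, I₂, S₂, h₂, hc₂⟩ := ihy
      have h₃ : ∃ D I S, NormalEdit true D I S (a :: x) (b :: y) ∧
          D + I + S ≤ (if a = b then 0 else 1) + levenshtein defaultCost x y := by
        obtain ⟨D, I, S, h, hc⟩ := ihx y
        by_cases hab : a = b
        · subst hab
          exact ⟨D, I, S, keep a h, by rwa [if_pos rfl, zero_add]⟩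
        · exact ⟨D, I, S + 1, sub hab h, by rw [if_neg hab]; omega⟩
      rcases min_choice (1 + levenshtein defaultCost x (b :: y))
          (min (1 + levenshtein defaultCost (a :: x) y)
            ((if a = b then 0 else 1) + levenshtein defaultCost x y)) with hmin | hmin <;>
        rw [hmin]
      · exact ⟨D₁ + 1, I₁, S₁, h₁.cons_del a, by omega⟩
      rcases min_choice (1 + levenshtein defaultCost (a :: x) y)
          ((if a = b then 0 else 1) + levenshtein defaultCost x y) with hmin | hmin <;>
        rw [hmin]
      · exact ⟨D₂, I₂ + 1, S₂, ins b h₂, by omega⟩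
      · exact h₃

theorem setOf_nil_subset :
    {y | NormalEdit q D I S ([] : List α) y} ⊆
      {y | (D = 0 ∧ I = 0 ∧ S = 0) ∧ y ∈ ({[]} : Set (List α))}
        ∪ Set.image2 List.cons Set.univ {y | (q ∧ I ≠ 0) ∧ NormalEdit true D (I - 1) S [] y} := by
  rintro y h
  cases h with
  | nil => exact Or.inl ⟨⟨rfl, rfl, rfl⟩, rfl⟩
  | ins b h => exact Or.inr ⟨b, trivial, _, ⟨⟨rfl, by omega⟩, h⟩, rfl⟩

theorem setOf_cons_subset (a : α) (x : List α) :
    {y | NormalEdit q D I S (a :: x) y} ⊆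
      (a :: ·) '' {y | NormalEdit true D I S x y}
        ∪ Set.image2 List.cons {a}ᶜ {y | S ≠ 0 ∧ NormalEdit true D I (S - 1) x y}
        ∪ {y | D ≠ 0 ∧ NormalEdit false (D - 1) I S x y}
        ∪ Set.image2 List.cons Set.univ
            {y | (q ∧ I ≠ 0) ∧ NormalEdit true D (I - 1) S (a :: x) y} := by
  rintro y h
  cases h with
  | keep _ h => exact Or.inl (Or.inl (Or.inl ⟨_, h, rfl⟩))
  | sub hab h => exact Or.inl (Or.inl (Or.inr ⟨_, Ne.symm hab, _, ⟨by omega, h⟩, rfl⟩))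
  | del _ h => exact Or.inl (Or.inr ⟨by omega, h⟩)
  | ins b h => exact Or.inr ⟨b, trivial, _, ⟨⟨rfl, by omega⟩, h⟩, rfl⟩

end NormalEdit

theorem Nat.choose_mul_choose_sub_le_succ (n D S : ℕ) (hDS : D + S ≤ n + 1) :
    n.choose D * (n - D).choose S
      + (if S ≠ 0 then n.choose D * (n - D).choose (S - 1) else 0)
      + (if D ≠ 0 then n.choose (D - 1) * (n + 1 - D).choose S else 0)
      ≤ (n + 1).choose D * (n + 1 - D).choose S := by
  rcases D with _ | D <;> rcases S with _ | S
  · simp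
  · simp [Nat.choose_succ_succ' n S, add_comm]
  · simp [Nat.choose_succ_succ' n D, add_comm]
  · simp only [ne_eq, Nat.add_one_ne_zero, not_false_eq_true, if_true, Nat.add_sub_cancel,
      Nat.add_sub_add_right, Nat.choose_succ_succ' n D,
      show n - D = n - (D + 1) + 1 by omega, Nat.choose_succ_succ' (n - (D + 1)) S]
    nlinarith

/-- Choices of the deleted and substituted positions of the source, of the inserted positions of
the target (of length `n + I - D`; its first position is excluded when `q = false`) and of the
new symbols. -/
def normalEditBound (k : ℕ) (q : Bool) (n D I S : ℕ) : ℕ :=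
  k ^ I * (k - 1) ^ S *
    (n.choose D * (n - D).choose S * (cond q (n + I - D) (n + I - D - 1)).choose I)

theorem normalEditBound_nil_le (k : ℕ) (q : Bool) (D I S : ℕ) :
    (if D = 0 ∧ I = 0 ∧ S = 0 then 1 else 0)
      + k * (if q ∧ I ≠ 0 then normalEditBound k true 0 D (I - 1) S else 0)
      ≤ normalEditBound k q 0 D I S := by
  rcases D with _ | D <;> rcases S with _ | S <;> rcases I with _ | I <;> cases q <;>
    simp [normalEditBound, pow_succ']

theorem Nat.choose_sub_one_add_ite (q : Bool) {L I : ℕ} (hIL : I ≤ L) :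
    (L - 1).choose I + (if q ∧ I ≠ 0 then (L - 1).choose (I - 1) else 0)
      = (cond q L (L - 1)).choose I := by
  cases q
  · simp
  rcases I with _ | I
  · simp
  · rw [if_pos ⟨rfl, Nat.add_one_ne_zero I⟩, cond_true, show L = L - 1 + 1 by omega,
      Nat.choose_succ_succ', Nat.add_sub_cancel, Nat.add_sub_cancel, add_comm]

theorem normalEditBound_cons_le (k : ℕ) (q : Bool) (n D I S : ℕ) (hDS : D + S ≤ n + 1) :
    normalEditBound k true n D I S
      + (k - 1) * (if S ≠ 0 then normalEditBound k true n D I (S - 1) else 0)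
      + (if D ≠ 0 then normalEditBound k false n (D - 1) I S else 0)
      + k * (if q ∧ I ≠ 0 then normalEditBound k true (n + 1) D (I - 1) S else 0)
      ≤ normalEditBound k q (n + 1) D I S := by
  set P := k ^ I * (k - 1) ^ S
  set L := n + 1 + I - D
  set A := (n + 1).choose D * (n + 1 - D).choose S
  have hsub : (k - 1) * (if S ≠ 0 then normalEditBound k true n D I (S - 1) else 0)
      = P * (if S ≠ 0 then n.choose D * (n - D).choose (S - 1) else 0) * (L - 1).choose I := by
    split_ifs with hS
    · obtain ⟨S, rfl⟩ := Nat.exists_eq_add_one_of_ne_zero hS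
      simp only [normalEditBound, P, L, cond_true, Nat.add_sub_cancel,
        show n + I - D = n + 1 + I - D - 1 by omega]
      ring
    · simp
  have hdel : (if D ≠ 0 then normalEditBound k false n (D - 1) I S else 0)
      = P * (if D ≠ 0 then n.choose (D - 1) * (n + 1 - D).choose S else 0) * (L - 1).choose I := by
    split_ifs with hD
    · simp only [normalEditBound, P, L, cond_false, show n - (D - 1) = n + 1 - D by omega,
        show n + I - (D - 1) - 1 = n + 1 + I - D - 1 by omega]
      ring
    · simp
  have hins : k * (if q ∧ I ≠ 0 then normalEditBound k true (n + 1) D (I - 1) S else 0)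
      = P * A * (if q ∧ I ≠ 0 then (L - 1).choose (I - 1) else 0) := by
    split_ifs with hI
    · obtain ⟨I, rfl⟩ := Nat.exists_eq_add_one_of_ne_zero hI.2
      simp only [normalEditBound, P, L, A, cond_true, Nat.add_sub_cancel,
        show n + 1 + I - D = n + 1 + (I + 1) - D - 1 by omega]
      ring
    · simp
  have hkeep :
      normalEditBound k true n D I S = P * (n.choose D * (n - D).choose S) * (L - 1).choose I := by
    simp only [normalEditBound, P, L, cond_true, show n + I - D = n + 1 + I - D - 1 by omega]
    ring
  have hpascal := Nat.choose_sub_one_add_ite q (show I ≤ L by omega)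
  have htri := Nat.choose_mul_choose_sub_le_succ n D S hDS
  calc _ = P * (L - 1).choose I * (n.choose D * (n - D).choose S
          + (if S ≠ 0 then n.choose D * (n - D).choose (S - 1) else 0)
          + (if D ≠ 0 then n.choose (D - 1) * (n + 1 - D).choose S else 0))
        + P * A * (if q ∧ I ≠ 0 then (L - 1).choose (I - 1) else 0) := by
        rw [hkeep, hsub, hdel, hins]; ring
    _ ≤ P * (L - 1).choose I * A
          + P * A * (if q ∧ I ≠ 0 then (L - 1).choose (I - 1) else 0) := by
        gcongr
    _ = normalEditBound k q (n + 1) D I S := by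
        rw [normalEditBound, ← hpascal]
        cases q <;> ring

theorem Set.encard_image2_le {α β γ : Type*} (f : α → β → γ) (s : Set α) (t : Set β) :
    (Set.image2 f s t).encard ≤ s.encard * t.encard := by
  rw [← Set.image_uncurry_prod, ← Set.encard_prod]
  exact Set.encard_image_le _ _

theorem Set.encard_setOf_and_le {β : Type*} {P : Prop} [Decidable P] {p : β → Prop} {b : ℕ}
    (h : P → {y | p y}.encard ≤ b) : {y | P ∧ p y}.encard ≤ ((if P then b else 0 : ℕ) : ℕ∞) := by
  split_ifs with hP
  · simpa [hP] using h hP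
  · simp [hP]

theorem encard_setOf_normalEdit_le {α : Type*} [Fintype α] (q : Bool) (D I S : ℕ) (x : List α) :
    {y | NormalEdit q D I S x y}.encard ≤ normalEditBound (Fintype.card α) q x.length D I S := by
  classical
  set k := Fintype.card α
  have hcompl (a : α) : ({a}ᶜ : Set α).encard = (k - 1 : ℕ) := by
    rw [Set.encard_eq_coe_toFinset_card, Set.toFinset_compl, Finset.card_compl,
      Set.toFinset_singleton, Finset.card_singleton]
  have huniv : (Set.univ : Set α).encard = k := by
    rw [Set.encard_univ, ENat.card_eq_coe_fintype_card]
  induction x generalizing q D I S with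
  | nil =>
    induction I using Nat.strong_induction_on generalizing q with
    | _ I ihI =>
    have hnil := Set.encard_setOf_and_le (P := D = 0 ∧ I = 0 ∧ S = 0)
      (p := (· ∈ ({[]} : Set (List α)))) (b := 1) (fun _ => by simp)
    have hins := Set.encard_setOf_and_le (P := q ∧ I ≠ 0)
      (p := NormalEdit true D (I - 1) S []) (fun h => ihI (I - 1) (by omega) true)
    calc _ ≤ _ := Set.encard_le_encard NormalEdit.setOf_nil_subset
      _ ≤ _ := Set.encard_union_le _ _
      _ ≤ ((if D = 0 ∧ I = 0 ∧ S = 0 then 1 else 0 : ℕ) : ℕ∞)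
          + k * ((if q ∧ I ≠ 0 then normalEditBound k true 0 D (I - 1) S else 0 : ℕ) : ℕ∞) :=
        add_le_add hnil
          ((Set.encard_image2_le _ _ _).trans (by rw [huniv]; exact mul_le_mul_right hins _))
      _ ≤ _ := by exact_mod_cast normalEditBound_nil_le k q D I S
  | cons a x ih =>
    induction I using Nat.strong_induction_on generalizing q with
    | _ I ihI =>
    rcases Set.eq_empty_or_nonempty {y | NormalEdit q D I S (a :: x) y} with he | ⟨y, hy⟩
    · simp [he]
    have hkeep := (Set.encard_image_le (a :: ·) _).trans (ih true D I S)
    have hsub := Set.encard_setOf_and_le (P := S ≠ 0)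
      (p := NormalEdit true D I (S - 1) x) (fun _ => ih true D I (S - 1))
    have hdel := Set.encard_setOf_and_le (P := D ≠ 0)
      (p := NormalEdit false (D - 1) I S x) (fun _ => ih false (D - 1) I S)
    have hins := Set.encard_setOf_and_le (P := q ∧ I ≠ 0)
      (p := NormalEdit true D (I - 1) S (a :: x)) (fun h => ihI (I - 1) (by omega) true)
    calc _ ≤ _ := Set.encard_le_encard (NormalEdit.setOf_cons_subset a x)
      _ ≤ _ := (Set.encard_union_le _ _).trans (add_le_add_left
          ((Set.encard_union_le _ _).trans (add_le_add_left (Set.encard_union_le _ _) _)) _)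
      _ ≤ (normalEditBound k true x.length D I S : ℕ∞)
          + (k - 1 : ℕ) *
            ((if S ≠ 0 then normalEditBound k true x.length D I (S - 1) else 0 : ℕ) : ℕ∞)
          + ((if D ≠ 0 then normalEditBound k false x.length (D - 1) I S else 0 : ℕ) : ℕ∞)
          + k * ((if q ∧ I ≠ 0 then normalEditBound k true (x.length + 1) D (I - 1) S
              else 0 : ℕ) : ℕ∞) :=
        add_le_add (add_le_add (add_le_add hkeep
          ((Set.encard_image2_le _ _ _).trans (by rw [hcompl]; exact mul_le_mul_right hsub _)))
          hdel) ((Set.encard_image2_le _ _ _).trans (by rw [huniv]; exact mul_le_mul_right hins _))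
      _ ≤ _ := by exact_mod_cast normalEditBound_cons_le k q x.length D I S hy.add_le_length

theorem binEntropy_eq_div_log_two (t : ℝ) : binEntropy t = Real.binEntropy t / Real.log 2 := by
  rw [binEntropy, Real.binEntropy, Real.logb, Real.logb, Real.log_inv, Real.log_inv]
  ring

theorem gExp_mul_log_two (k : ℕ) (β δ : ℝ) :
    gExp k β δ * Real.log 2 = (β - 2 * δ) * Real.log (k - 1) - (1 - δ) * Real.log k
      + 2 * Real.binEntropy δ + (1 - δ) * Real.binEntropy ((β - 2 * δ) / (1 - δ)) := by
  have : Real.log 2 ≠ 0 := by positivity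
  simp only [gExp, binEntropy_eq_div_log_two, Real.logb]
  field_simp

theorem Nat.log_choose_le_mul_binEntropy (n d : ℕ) (hd : d ≤ n) :
    Real.log (n.choose d) ≤ n * Real.binEntropy (d / n) := by
  rcases Nat.eq_zero_or_pos d with rfl | hd₀
  · simp
  rcases hd.eq_or_lt with rfl | hdn
  · simp [div_self (by positivity : (d : ℝ) ≠ 0)]
  set p : ℝ := d / n
  have hn : (0 : ℝ) < n := by exact_mod_cast hd₀.trans hdn
  have hp₀ : 0 < p := by positivity
  have hp₁ : p < 1 := (div_lt_one hn).2 (by exact_mod_cast hdn)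
  have hterm : n.choose d * (p ^ d * (1 - p) ^ (n - d)) ≤ 1 :=
    calc _ = p ^ d * (1 - p) ^ (n - d) * n.choose d := mul_comm _ _
      _ ≤ ∑ i ∈ Finset.range (n + 1), p ^ i * (1 - p) ^ (n - i) * n.choose i :=
        Finset.single_le_sum (f := fun i => p ^ i * (1 - p) ^ (n - i) * n.choose i)
          (fun i _ => by have := hp₁.le; positivity) (Finset.mem_range.2 (by omega))
      _ = 1 := by rw [← add_pow, add_sub_cancel, one_pow]
  have hchoose : (0 : ℝ) < n.choose d := by exact_mod_cast Nat.choose_pos hd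
  have hlog := Real.log_nonpos (by positivity) hterm
  rw [Real.log_mul (by positivity) (by positivity), Real.log_mul (by positivity) (by positivity),
    Real.log_pow, Real.log_pow, Nat.cast_sub hd] at hlog
  have hentropy : n * Real.binEntropy p = -(d * Real.log p + (n - d) * Real.log (1 - p)) := by
    have hnp : (n : ℝ) * p = d := by simp only [p]; field_simp
    rw [Real.binEntropy, Real.log_inv, Real.log_inv, ← hnp]
    ring
  linarith

theorem normalEditBound_le_rpow_gExp {k n D S : ℕ} (hk : 2 ≤ k) (hDS : D + S ≤ n) :
    (normalEditBound k true n D D S : ℝ) ≤ k ^ n * 2 ^ (n * gExp k ((2 * D + S) / n) (D / n)) := by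
  rcases Nat.eq_zero_or_pos n with rfl | hn₀
  · obtain ⟨rfl, rfl⟩ : D = 0 ∧ S = 0 := by omega
    simp [normalEditBound]
  have hn : (n : ℝ) ≠ 0 := by positivity
  have hk₁ : (0 : ℝ) < k - 1 := by rw [sub_pos]; exact_mod_cast hk
  have hC₁ : (0 : ℝ) < n.choose D := by exact_mod_cast Nat.choose_pos (by omega)
  have hC₂ : (0 : ℝ) < (n - D).choose S := by exact_mod_cast Nat.choose_pos (by omega)
  have hbound : (normalEditBound k true n D D S : ℝ)
      = k ^ D * (k - 1) ^ S * (n.choose D * (n - D).choose S * n.choose D) := by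
    simp [normalEditBound, Nat.cast_sub (by omega : 1 ≤ k)]
  have hg : n * (gExp k ((2 * D + S) / n) (D / n) * Real.log 2)
      = S * Real.log (k - 1) - (n - D) * Real.log k + 2 * (n * Real.binEntropy (D / n))
        + ((n - D : ℕ) : ℝ) * Real.binEntropy (S / (n - D : ℕ)) := by
    have e₁ : (2 * D + S) / n - 2 * (D / n) = (S : ℝ) / n := by field_simp; ring
    have e₂ : 1 - D / n = ((n - D : ℕ) : ℝ) / n := by rw [Nat.cast_sub (by omega)]; field_simp
    rw [gExp_mul_log_two, e₁, e₂, div_div_div_cancel_right₀ hn, Nat.cast_sub (by omega)]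
    field_simp
  have h₁ := Nat.log_choose_le_mul_binEntropy n D (by omega)
  have h₂ := Nat.log_choose_le_mul_binEntropy (n - D) S (by omega)
  have hk₀ : (0 : ℝ) < k := by positivity
  have hpow₁ := pow_pos hk₀ D
  have hpow₂ := pow_pos hk₁ S
  rw [hbound, ← Real.log_le_log_iff (by positivity) (by positivity),
    Real.log_mul (pow_pos hk₀ n).ne' (Real.rpow_pos_of_pos two_pos _).ne', Real.log_rpow two_pos,
    Real.log_pow, mul_assoc (n : ℝ), hg, Real.log_mul (by positivity) (by positivity),
    Real.log_mul hpow₁.ne' hpow₂.ne', Real.log_mul (by positivity) hC₁.ne',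
    Real.log_mul hC₁.ne' hC₂.ne', Real.log_pow, Real.log_pow]
  linarith

theorem bddAbove_gExp_image (k : ℕ) {β : ℝ} (hβ : β ≤ 1) :
    BddAbove (gExp k β '' Set.Icc 0 (β / 2)) := by
  refine isCompact_Icc.bddAbove_image ?_
  have : ∀ δ ∈ Set.Icc 0 (β / 2), 1 - δ ≠ 0 := fun δ hδ => by linarith [hδ.2]
  unfold gExp
  simp only [binEntropy_eq_div_log_two]
  fun_prop (disch := assumption)

theorem gExp_le_GExp (k : ℕ) {β δ : ℝ} (hβ : β ≤ 1) (hδ₀ : 0 ≤ δ) (hδ : δ ≤ β / 2) :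
    gExp k β δ ≤ GExp k β :=
  le_csSup (bddAbove_gExp_image k hβ) ⟨δ, ⟨hδ₀, hδ⟩, rfl⟩

theorem gExp_mul_log_two_eq_qaryEntropy (k : ℕ) (β : ℝ) {δ : ℝ} (hδ : δ ≠ 1) :
    gExp k β δ * Real.log 2 = (1 - δ) * Real.qaryEntropy k ((β - 2 * δ) / (1 - δ))
      - (1 - δ) * Real.log k + 2 * Real.binEntropy δ := by
  have : 1 - δ ≠ 0 := sub_ne_zero.2 hδ.symm
  rw [gExp_mul_log_two, Real.qaryEntropy]
  push_cast
  field_simp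
  ring

theorem Real.qaryEntropy_one_sub_inv {k : ℕ} (hk : 2 ≤ k) :
    Real.qaryEntropy k (1 - 1 / k) = Real.log k := by
  have hk₁ : (0 : ℝ) < k - 1 := by rw [sub_pos]; exact_mod_cast hk
  have hk₀ : (0 : ℝ) < k := by linarith
  rw [Real.qaryEntropy, Real.binEntropy_one_sub, Real.binEntropy, one_div, inv_inv,
    show 1 - (k : ℝ)⁻¹ = (k - 1) / k by field_simp, inv_div,
    Real.log_div hk₀.ne' hk₁.ne']
  push_cast
  field_simp
  ring

-- Up to terms free of `β`, `g_k(β, δ)` is `(1 - δ)` times the `k`-ary entropy of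
-- `(β - 2δ) / (1 - δ)`, which increases up to `1 - 1/k`.
theorem gExp_le_gExp_of_le {k : ℕ} (hk : 2 ≤ k) {b β δ : ℝ} (hδ : 0 ≤ δ) (h2δ : 2 * δ ≤ b)
    (hb : b ≤ β) (hβ : β ≤ 1 - 1 / k) : gExp k b δ ≤ gExp k β δ := by
  have hk₀ : (0 : ℝ) < k := by positivity
  have hk' : 0 ≤ 1 / (k : ℝ) := by positivity
  have hδ₁ : 0 < 1 - δ := by linarith
  have hmem : ∀ c, 2 * δ ≤ c → c ≤ β → (c - 2 * δ) / (1 - δ) ∈ Set.Icc 0 (1 - 1 / (k : ℝ)) :=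
    fun c h₁ h₂ => ⟨div_nonneg (by linarith) hδ₁.le, by
      rw [div_le_iff₀ hδ₁]; nlinarith [mul_nonneg hδ hk']⟩
  refine le_of_mul_le_mul_right ?_ (Real.log_pos one_lt_two)
  rw [gExp_mul_log_two_eq_qaryEntropy k b (sub_pos.1 hδ₁).ne,
    gExp_mul_log_two_eq_qaryEntropy k β (sub_pos.1 hδ₁).ne]
  gcongr
  exact (Real.qaryEntropy_strictMonoOn hk).monotoneOn (hmem b h2δ hb)
    (hmem β (h2δ.trans hb) le_rfl) (by gcongr)

theorem GExp_nonneg_of_one_sub_inv_lt {k : ℕ} (hk : 2 ≤ k) {β : ℝ} (hβ₀ : 1 - 1 / k < β)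
    (hβ₁ : β ≤ 1) : 0 ≤ GExp k β := by
  have hk₂ : (2 : ℝ) ≤ k := by exact_mod_cast hk
  have hk₀ : (0 : ℝ) < k := by positivity
  have hkβ : (k : ℝ) - 1 < k * β := by
    have := mul_lt_mul_of_pos_left hβ₀ hk₀
    rwa [mul_sub, mul_one, mul_one_div_cancel hk₀.ne'] at this
  -- the `δ` for which `(β - 2δ) / (1 - δ) = 1 - 1/k`, the maximiser of the `k`-ary entropy
  set δ := (k * β - k + 1) / (k + 1)
  have hδ₀ : 0 ≤ δ := div_nonneg (by linarith) (by positivity)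
  have hδβ : δ ≤ β / 2 := by
    rw [div_le_div_iff₀ (by positivity) two_pos]
    nlinarith [mul_le_mul_of_nonneg_left hβ₁ (by linarith : (0 : ℝ) ≤ k - 1)]
  have hδ₁ : δ ≠ 1 := by intro h; linarith
  have hpeak : (β - 2 * δ) / (1 - δ) = 1 - 1 / k := by
    rw [div_eq_iff (sub_ne_zero.2 hδ₁.symm)]
    simp only [δ]
    field_simp
    ring
  refine le_trans ?_ (gExp_le_GExp k hβ₁ hδ₀ hδβ)
  refine nonneg_of_mul_nonneg_left ?_ (Real.log_pos one_lt_two)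
  rw [gExp_mul_log_two_eq_qaryEntropy k β hδ₁, hpeak, Real.qaryEntropy_one_sub_inv hk]
  have := Real.binEntropy_nonneg hδ₀ (by linarith)
  linarith

theorem le_one_sub_inv_of_GExp_neg {k : ℕ} (hk : 2 ≤ k) {β : ℝ} (hβ : β ≤ 1)
    (hG : GExp k β < 0) : β ≤ 1 - 1 / k := by
  by_contra! h
  exact hG.not_ge (GExp_nonneg_of_one_sub_inv_lt hk h hβ)

theorem normalEditBound_le_pow_GExp {k n D S : ℕ} (hk : 2 ≤ k) (hn : n ≠ 0) {β : ℝ}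
    (hβ : β ≤ 1 - 1 / k) (hDS : 2 * D + S ≤ β * n) :
    (normalEditBound k true n D D S : ℝ) ≤ k ^ n * (2 ^ GExp k β) ^ n := by
  have hn' : (0 : ℝ) < n := by positivity
  have hS : (0 : ℝ) ≤ S := S.cast_nonneg
  have hβ₁ : β ≤ 1 := hβ.trans (by simp)
  have hb : (2 * D + S) / n ≤ β := by rwa [div_le_iff₀ hn']
  have hδ : 2 * (D / n : ℝ) ≤ (2 * D + S) / n := by rw [← mul_div_assoc]; gcongr; linarith
  have hDSn : D + S ≤ n := by
    have := mul_le_of_le_one_left hn'.le hβ₁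
    exact_mod_cast (show (D + S : ℝ) ≤ n by linarith [D.cast_nonneg (α := ℝ)])
  refine (normalEditBound_le_rpow_gExp hk hDSn).trans ?_
  rw [← Real.rpow_mul_natCast two_pos.le, mul_comm (GExp k β)]
  gcongr
  · exact one_le_two
  exact (gExp_le_gExp_of_le hk (by positivity) hδ hb hβ).trans
    (gExp_le_GExp k hβ₁ (by positivity) (by linarith))

section Counting

open Finset

theorem Finset.mul_card_filter_lt_le_sum {ι : Type*} (s : Finset ι) (f : ι → ℕ) (m : ℕ) :
    (m + 1) * #{i ∈ s | m < f i} ≤ ∑ i ∈ s, f i :=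
  calc (m + 1) * #{i ∈ s | m < f i} = #{i ∈ s | m < f i} • (m + 1) := by
        rw [smul_eq_mul, mul_comm]
    _ ≤ ∑ i ∈ s with m < f i, f i := card_nsmul_le_sum _ _ _ fun i hi => (mem_filter.1 hi).2
    _ ≤ ∑ i ∈ s, f i := sum_le_sum_of_subset (filter_subset _ _)

variable {k n : ℕ}

theorem card_editDist_le_le (m : ℕ) (x : Fin n → Fin k) :
    #{y : Fin n → Fin k | editDist (List.ofFn x) (List.ofFn y) ≤ m}
      ≤ ∑ p ∈ range (m + 1) ×ˢ range (m + 1) with 2 * p.1 + p.2 ≤ m,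
          normalEditBound k true n p.1 p.1 p.2 := by
  set P := {p ∈ range (m + 1) ×ˢ range (m + 1) | 2 * p.1 + p.2 ≤ m}
  have hmaps : Set.MapsTo (List.ofFn (n := n))
      ↑({y | editDist (List.ofFn x) (List.ofFn y) ≤ m} : Finset (Fin n → Fin k))
      (⋃ p ∈ P, {z | NormalEdit true p.1 p.1 p.2 (List.ofFn x) z}) := by
    intro y hy
    obtain ⟨D, I, S, h, hc⟩ := NormalEdit.exists_le_levenshtein (List.ofFn x) (List.ofFn y)
    have hI : I = D := by simpa using h.length_add
    rw [hI] at h hc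
    have hm : D + D + S ≤ m := hc.trans (mem_filter.1 hy).2
    exact Set.mem_biUnion (x := (D, S)) (by simp [P]; omega) h
  have hcount : ∀ p ∈ P, {z | NormalEdit true p.1 p.1 p.2 (List.ofFn x) z}.encard
      ≤ normalEditBound k true n p.1 p.1 p.2 := fun p _ => by
    simpa using encard_setOf_normalEdit_le true p.1 p.1 p.2 (List.ofFn x)
  have := (Set.encard_le_encard_of_injOn hmaps List.ofFn_injective.injOn).trans
    ((P.set_encard_biUnion_le _).trans (sum_le_sum hcount))
  exact_mod_cast this

theorem card_editDist_le_le_pow {m : ℕ} (hk : 2 ≤ k) (hn : n ≠ 0) {β : ℝ}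
    (hβ : β ≤ 1 - 1 / k) (hm : (m : ℝ) ≤ β * n) (x : Fin n → Fin k) :
    (#{y : Fin n → Fin k | editDist (List.ofFn x) (List.ofFn y) ≤ m} : ℝ)
      ≤ (m + 1) ^ 2 * k ^ n * (2 ^ GExp k β) ^ n := by
  set P := {p ∈ range (m + 1) ×ˢ range (m + 1) | 2 * p.1 + p.2 ≤ m}
  calc _ ≤ ((∑ p ∈ P, normalEditBound k true n p.1 p.1 p.2 : ℕ) : ℝ) := by
        exact_mod_cast card_editDist_le_le m x
    _ ≤ ∑ _p ∈ P, (k ^ n * (2 ^ GExp k β) ^ n : ℝ) := by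
        push_cast
        exact sum_le_sum fun p hp => normalEditBound_le_pow_GExp hk hn hβ
          (le_trans (by exact_mod_cast (mem_filter.1 hp).2) hm)
    _ ≤ #(range (m + 1) ×ˢ range (m + 1)) * (k ^ n * (2 ^ GExp k β) ^ n : ℝ) := by
        rw [sum_const, nsmul_eq_mul]
        gcongr
        exact filter_subset _ _
    _ = _ := by simp [card_product]; ring

theorem le_avgEditDist {m : ℕ} (hk : k ≠ 0) {c : ℝ}
    (hc : ∀ x : Fin n → Fin k,
      (#{y : Fin n → Fin k | editDist (List.ofFn x) (List.ofFn y) ≤ m} : ℝ) ≤ c) :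
    (m + 1) * (1 - c / k ^ n) ≤ avgEditDist k n := by
  have hrow (x : Fin n → Fin k) :
      (m + 1) * (k ^ n - c) ≤ ∑ y : Fin n → Fin k, (editDist (List.ofFn x) (List.ofFn y) : ℝ) := by
    have hsplit : (#{y : Fin n → Fin k | editDist (List.ofFn x) (List.ofFn y) ≤ m} : ℝ)
        + #{y : Fin n → Fin k | m < editDist (List.ofFn x) (List.ofFn y)} = k ^ n := by
      have := card_filter_add_card_filter_not (s := univ)
        (fun y : Fin n → Fin k => editDist (List.ofFn x) (List.ofFn y) ≤ m)
      simp only [not_le, card_univ, Fintype.card_fun, Fintype.card_fin] at this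
      exact_mod_cast this
    have hmarkov : ((m : ℝ) + 1) * #{y : Fin n → Fin k | m < editDist (List.ofFn x) (List.ofFn y)}
        ≤ ∑ y : Fin n → Fin k, (editDist (List.ofFn x) (List.ofFn y) : ℝ) := by
      exact_mod_cast mul_card_filter_lt_le_sum univ _ m
    nlinarith [hc x]
  calc (m + 1) * (1 - c / k ^ n)
      = ((k : ℝ) ^ (2 * n))⁻¹ * ∑ _x : Fin n → Fin k, (m + 1) * (k ^ n - c) := by
        simp only [sum_const, card_univ, Fintype.card_fun, Fintype.card_fin, nsmul_eq_mul]
        push_cast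
        field_simp
        ring
    _ ≤ avgEditDist k n := by
        unfold avgEditDist
        gcongr with x
        exact hrow x

theorem sub_le_alphaN (hk : 2 ≤ k) (hn : n ≠ 0) {β : ℝ} (hβ₀ : 0 ≤ β) (hβ : β ≤ 1 - 1 / k) :
    β - 8 * (n ^ 2 * (2 ^ GExp k β) ^ n) ≤ alphaN k n := by
  set m := ⌊β * n⌋₊
  have hn' : (0 : ℝ) < n := by positivity
  have hm : (m : ℝ) ≤ β * n := Nat.floor_le (by positivity)
  have hm' : β * n < m + 1 := Nat.lt_floor_add_one _
  have hmn : (m : ℝ) + 1 ≤ 2 * n := by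
    have : β ≤ 1 := hβ.trans (by simp)
    have : (1 : ℝ) ≤ n := by exact_mod_cast Nat.one_le_iff_ne_zero.2 hn
    nlinarith
  have havg := le_avgEditDist (by omega) (card_editDist_le_le_pow hk hn hβ hm)
  rw [mul_div_right_comm, mul_div_cancel_right₀ _ (by positivity)] at havg
  have hcube : ((m : ℝ) + 1) ^ 3 ≤ (2 * n) ^ 3 := by gcongr
  rw [alphaN, le_div_iff₀ hn']
  nlinarith [mul_le_mul_of_nonneg_right hcube (by positivity : (0 : ℝ) ≤ (2 ^ GExp k β) ^ n)]

end Counting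

/-- If `G_k(β) < 0` for `β ∈ [0,1]`, then `α_k ≥ β`; consequently
`α_k ≥ sup { β ∈ [0,1] : G_k(β) < 0 }`. -/
theorem alpha_lower_bound_from_G (k : ℕ) (hk : 2 ≤ k) (α : ℝ)
    (hconv : Tendsto (fun n => alphaN k n) atTop (nhds α)) :
    (∀ β ∈ Set.Icc (0 : ℝ) 1, GExp k β < 0 → β ≤ α) ∧
    sSup {β : ℝ | β ∈ Set.Icc (0 : ℝ) 1 ∧ GExp k β < 0} ≤ α := by
  have hle : ∀ β ∈ Set.Icc (0 : ℝ) 1, GExp k β < 0 → β ≤ α := by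
    rintro β ⟨hβ₀, hβ₁⟩ hG
    have hr : (2 : ℝ) ^ GExp k β < 1 := Real.rpow_lt_one_of_one_lt_of_neg one_lt_two hG
    have herr : Tendsto (fun n : ℕ => β - 8 * (n ^ 2 * (2 ^ GExp k β) ^ n)) atTop (nhds β) := by
      simpa using ((tendsto_pow_const_mul_const_pow_of_lt_one 2 (by positivity) hr).const_mul
        8).const_sub β
    exact le_of_tendsto_of_tendsto herr hconv <| eventually_atTop.2 ⟨1, fun n hn =>
      sub_le_alphaN hk (by omega) hβ₀ (le_one_sub_inv_of_GExp_neg hk hβ₁ hG)⟩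
  have hα : 0 ≤ α := ge_of_tendsto' hconv fun n => by unfold alphaN avgEditDist; positivity
  exact ⟨hle, Real.sSup_le (fun β hβ => hle β hβ.1 hβ.2) hα⟩
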